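/- Let n ≥ 4, let T be a triangulation of the convex n-gon, and let e be a chord of T. Then there exists exactly one chord f with f ≠ e such that (T \ {e}) ∪ {f} is again a triangulation of the n-gon; that is, every chord of a triangulation of a convex polygon can be flipped, and the flip is unique. -/
import Mathlib


set_option linter.unusedSectionVars false

namespace FlipCut

/-- `x` lies strictly inside the open cyclic arc from `a` to `b`
(going forward in the cyclic order on `ZMod n`). -/
def Btw (n : ℕ) (a x b : ZMod n) : Prop :=
  0 < (x - a).val ∧ (x - a).val < (b - a).val

/-- An unordered pair of vertices of the convex `n`-gon is a *chord*:
its two endpoints are distinct and not cyclically adjacent. -/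
def IsChord (n : ℕ) (e : Sym2 (ZMod n)) : Prop :=
  ¬ e.IsDiag ∧ ∀ a ∈ e, ∀ b ∈ e, a ≠ b → b ≠ a + 1 ∧ b ≠ a - 1

/-- Two chords *cross*: they can be written as `{a, b}` and `{c, d}` where `c`
lies strictly inside the open cyclic arc from `a` to `b` and `d` lies strictly
inside the open cyclic arc from `b` to `a` (i.e. the endpoint pairs separate
each other in the cyclic order, equivalently exactly one of `c, d` lies in the
open cyclic arc from `a` to `b`). -/
def Crosses (n : ℕ) (e f : Sym2 (ZMod n)) : Prop :=
  ∃ a b c d : ZMod n, e = s(a, b) ∧ f = s(c, d) ∧ Btw n a c b ∧ Btw n b d a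

/-- A *triangulation* of the convex `n`-gon: a set of exactly `n - 3`
pairwise non-crossing chords. -/
def IsTriangulation (n : ℕ) (T : Finset (Sym2 (ZMod n))) : Prop :=
  T.card = n - 3 ∧ (∀ e ∈ T, IsChord n e) ∧
    ∀ e ∈ T, ∀ f ∈ T, e ≠ f → ¬ Crosses n e f

/-- Triangulations `T` and `T'` differ by a *flip*: their symmetric difference
has exactly two chords. -/
def FlipAdj (n : ℕ) (T T' : Finset (Sym2 (ZMod n))) : Prop :=
  (symmDiff T T').card = 2

/-- `T` *avoids* `X`: `T` contains no chord of `X`. -/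
def Avoids (n : ℕ) (T X : Finset (Sym2 (ZMod n))) : Prop :=
  ∀ e ∈ X, e ∉ T

/-- A vertex of the flip graph `F₋ₓ`: a triangulation avoiding `X`. -/
def AvoidingTri (n : ℕ) (X T : Finset (Sym2 (ZMod n))) : Prop :=
  IsTriangulation n T ∧ Avoids n T X

/-- A single edge of the flip graph `F₋ₓ`: both endpoints are triangulations
avoiding `X` and they differ by a flip. -/
def FlipStep (n : ℕ) (X T T' : Finset (Sym2 (ZMod n))) : Prop :=
  AvoidingTri n X T ∧ AvoidingTri n X T' ∧ FlipAdj n T T'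

/-- `S` and `T` are joined by a path in the flip graph `F₋ₓ`: a sequence of
flips in which every intermediate triangulation avoids `X`. -/
def FlipConn (n : ℕ) (X S T : Finset (Sym2 (ZMod n))) : Prop :=
  Relation.ReflTransGen (FlipStep n X) S T

/-- The flip graph `F₋ₓ` is connected. -/
def FlipGraphConnected (n : ℕ) (X : Finset (Sym2 (ZMod n))) : Prop :=
  ∀ S T, AvoidingTri n X S → AvoidingTri n X T → FlipConn n X S T

/-- `X` is a *flip cut set*: a set of chords such that the flip graph `F₋ₓ`
is disconnected. -/
def IsFlipCutSet (n : ℕ) (X : Finset (Sym2 (ZMod n))) : Prop :=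
  (∀ e ∈ X, IsChord n e) ∧ ¬ FlipGraphConnected n X



variable {n : ℕ}

/-- fundamental spec for subtraction of vals -/
lemma sub_spec [NeZero n] (a b : ZMod n) :
    ((a - b).val + b.val = a.val ∨ (a - b).val + b.val = a.val + n) := by
  have h1 : (a - b) + b = a := sub_add_cancel a b
  have h2 : ((a - b) + b).val = a.val := by rw [h1]
  rw [ZMod.val_add] at h2
  have h3 : (a - b).val < n := ZMod.val_lt _
  have h4 : b.val < n := ZMod.val_lt _
  rcases Nat.lt_or_ge ((a - b).val + b.val) n with h | h
  · left; rwa [Nat.mod_eq_of_lt h] at h2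
  · right
    have h5 : (a - b).val + b.val - n < n := by omega
    have h6 : ((a - b).val + b.val) % n = (a - b).val + b.val - n := by
      rw [Nat.mod_eq_sub_mod h, Nat.mod_eq_of_lt h5]
    omega

lemma val_eq_zero_iff [NeZero n] (a b : ZMod n) : (a - b).val = 0 ↔ a = b := by
  rw [ZMod.val_eq_zero, sub_eq_zero]

lemma eq_of_val_sub_eq [NeZero n] {a b c : ZMod n} (h : (a - c).val = (b - c).val) : a = b := by
  have := ZMod.val_injective n h
  have : a - c + c = b - c + c := by rw [this]
  simpa [sub_add_cancel] using this

/-- The canonical "chain" order: a, c, b, d in strict cyclic order starting at a. -/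
def Chain (n : ℕ) (a c b d : ZMod n) : Prop :=
  0 < (c - a).val ∧ (c - a).val < (b - a).val ∧ (b - a).val < (d - a).val

lemma sep_iff [NeZero n] (a b c d : ZMod n) :
    (Btw n a c b ∧ Btw n b d a) ↔ Chain n a c b d := by
  have s1 := sub_spec (d - a) (b - a)
  have s2 := sub_spec (0 : ZMod n) (b - a)
  have e1 : (d - a) - (b - a) = d - b := by ring
  have e2 : (0 : ZMod n) - (b - a) = a - b := by ring
  rw [e1] at s1; rw [e2] at s2
  have z : (0 : ZMod n).val = 0 := ZMod.val_zero
  rw [z] at s2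
  have h1 : (c - a).val < n := ZMod.val_lt _
  have h2 : (b - a).val < n := ZMod.val_lt _
  have h3 : (d - a).val < n := ZMod.val_lt _
  have h4 : (d - b).val < n := ZMod.val_lt _
  have h5 : (a - b).val < n := ZMod.val_lt _
  constructor
  · rintro ⟨⟨u1, u2⟩, ⟨u3, u4⟩⟩
    exact ⟨u1, u2, by omega⟩
  · rintro ⟨u1, u2, u3⟩
    exact ⟨⟨u1, u2⟩, ⟨by omega, by omega⟩⟩

lemma crosses_iff [NeZero n] (e f : Sym2 (ZMod n)) :
    Crosses n e f ↔ ∃ a b c d : ZMod n, e = s(a, b) ∧ f = s(c, d) ∧ Chain n a c b d := by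
  constructor
  · rintro ⟨a, b, c, d, he, hf, h1, h2⟩
    exact ⟨a, b, c, d, he, hf, (sep_iff a b c d).1 ⟨h1, h2⟩⟩
  · rintro ⟨a, b, c, d, he, hf, h⟩
    obtain ⟨h1, h2⟩ := (sep_iff a b c d).2 h
    exact ⟨a, b, c, d, he, hf, h1, h2⟩

/-- rotate the chain: crossing is symmetric -/
lemma chain_rotate [NeZero n] {a b c d : ZMod n} (h : Chain n a c b d) : Chain n c b d a := by
  obtain ⟨u1, u2, u3⟩ := h
  have s1 := sub_spec (b - a) (c - a)
  have e1 : (b - a) - (c - a) = b - c := by ring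
  rw [e1] at s1
  have s2 := sub_spec (d - a) (c - a)
  have e2 : (d - a) - (c - a) = d - c := by ring
  rw [e2] at s2
  have s3 := sub_spec (0 : ZMod n) (c - a)
  have e3 : (0 : ZMod n) - (c - a) = a - c := by ring
  rw [e3, ZMod.val_zero] at s3
  have h1 : (b - c).val < n := ZMod.val_lt _
  have h2 : (d - c).val < n := ZMod.val_lt _
  have h3 : (a - c).val < n := ZMod.val_lt _
  have h4 : (b - a).val < n := ZMod.val_lt _
  have h5 : (d - a).val < n := ZMod.val_lt _
  exact ⟨by omega, by omega, by omega⟩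

/-- reverse the orientation of the first chord -/
lemma chain_swap [NeZero n] {a b c d : ZMod n} (h : Chain n a c b d) : Chain n b d a c := by
  obtain ⟨u1, u2, u3⟩ := h
  have s1 := sub_spec (d - a) (b - a)
  have e1 : (d - a) - (b - a) = d - b := by ring
  rw [e1] at s1
  have s2 := sub_spec (0 : ZMod n) (b - a)
  have e2 : (0 : ZMod n) - (b - a) = a - b := by ring
  rw [e2, ZMod.val_zero] at s2
  have s3 := sub_spec (c - a) (b - a)
  have e3 : (c - a) - (b - a) = c - b := by ring
  rw [e3] at s3
  have h1 : (d - b).val < n := ZMod.val_lt _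
  have h2 : (a - b).val < n := ZMod.val_lt _
  have h3 : (c - b).val < n := ZMod.val_lt _
  have h4 : (c - a).val < n := ZMod.val_lt _
  have h5 : (d - a).val < n := ZMod.val_lt _
  exact ⟨by omega, by omega, by omega⟩

lemma crosses_symm [NeZero n] {e f : Sym2 (ZMod n)} (h : Crosses n e f) : Crosses n f e := by
  rw [crosses_iff] at h ⊢
  obtain ⟨a, b, c, d, he, hf, hc⟩ := h
  exact ⟨c, d, b, a, hf, by rw [he, Sym2.eq_swap], chain_rotate hc⟩

/-- extract a chain with a *given* orientation of the first chord -/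
lemma crosses_elim [NeZero n] {e f : Sym2 (ZMod n)} {x y : ZMod n}
    (h : Crosses n e f) (hxy : e = s(x, y)) :
    ∃ c d, f = s(c, d) ∧ Chain n x c y d := by
  rw [crosses_iff] at h
  obtain ⟨a, b, c, d, he, hf, hc⟩ := h
  rw [he, Sym2.eq_iff] at hxy
  rcases hxy with ⟨rfl, rfl⟩ | ⟨rfl, rfl⟩
  · exact ⟨c, d, hf, hc⟩
  · exact ⟨d, c, by rw [hf, Sym2.eq_swap], chain_swap hc⟩

lemma chain_distinct [NeZero n] {a b c d : ZMod n} (h : Chain n a c b d) :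
    a ≠ b ∧ a ≠ c ∧ a ≠ d ∧ b ≠ c ∧ b ≠ d ∧ c ≠ d := by
  obtain ⟨u1, u2, u3⟩ := h
  refine ⟨?_, ?_, ?_, ?_, ?_, ?_⟩ <;> intro hh
  · rw [← hh, sub_self, ZMod.val_zero] at u2; omega
  · rw [← hh, sub_self, ZMod.val_zero] at u1; omega
  · rw [← hh, sub_self, ZMod.val_zero] at u3
    have := ZMod.val_lt (b - a); omega
  · exact (by omega : ¬ (c - a).val = (b - a).val) (by rw [hh])
  · exact (by omega : ¬ (d - a).val = (b - a).val) (by rw [hh])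
  · exact (by omega : ¬ (c - a).val = (d - a).val) (by rw [hh])


lemma val_nat (m : ℕ) (h : m < n) : ((m : ℕ) : ZMod n).val = m := ZMod.val_cast_of_lt h

lemma val_one'' (h : 1 < n) : (1 : ZMod n).val = 1 := by
  have := val_nat (n := n) 1 h; simpa using this

lemma val_two'' (h : 2 < n) : (2 : ZMod n).val = 2 := by
  have := val_nat (n := n) 2 h
  rw [show (((2:ℕ) : ZMod n)) = (2 : ZMod n) by norm_cast] at this
  exact this

lemma val_three'' (h : 3 < n) : (3 : ZMod n).val = 3 := by
  have := val_nat (n := n) 3 h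
  rw [show (((3:ℕ) : ZMod n)) = (3 : ZMod n) by norm_cast] at this
  exact this

lemma sub_val_one [NeZero n] (hn : 2 ≤ n) {x y : ZMod n} :
    y = x + 1 ↔ (y - x).val = 1 := by
  constructor
  · rintro rfl; rw [add_sub_cancel_left, val_one'' hn]
  · intro h
    have : (y - x).val = ((x + 1) - x).val := by rw [add_sub_cancel_left, val_one'' hn, h]
    have := eq_of_val_sub_eq (c := x) this
    exact this

lemma sub_val_negone [NeZero n] (hn : 2 ≤ n) {x y : ZMod n} :
    y = x - 1 ↔ (y - x).val = n - 1 := by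
  have hval : ((x - 1) - x).val = n - 1 := by
    have : (x - 1) - x = -1 := by ring
    rw [this]
    have h1 : (-1 : ZMod n) = -(1 : ZMod n) := by ring
    rw [h1, ZMod.neg_val]
    simp only [val_one'' hn]
    have : (1 : ZMod n) ≠ 0 := by
      intro h
      have := congrArg ZMod.val h
      rw [val_one'' hn, ZMod.val_zero] at this; omega
    rw [if_neg this]
  constructor
  · rintro rfl; exact hval
  · intro h
    exact eq_of_val_sub_eq (c := x) (by rw [h, hval])

lemma isChord_val [NeZero n] (hn : 2 ≤ n) (x y : ZMod n) :
    IsChord n s(x, y) ↔ 2 ≤ (y - x).val ∧ (y - x).val + 2 ≤ n := by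
  have hlt : (y - x).val < n := ZMod.val_lt _
  have hs := sub_spec (0 : ZMod n) (y - x)
  have he : (0 : ZMod n) - (y - x) = x - y := by ring
  rw [he, ZMod.val_zero] at hs
  have hlt2 : (x - y).val < n := ZMod.val_lt _
  constructor
  · rintro ⟨hd, h⟩
    have hxy : x ≠ y := by
      intro hh; exact hd (by rw [hh]; exact Sym2.mk_isDiag_iff.2 rfl)
    obtain ⟨h1, h2⟩ := h x (by simp) y (by simp) (Ne.symm hxy).symm
    have n1 : (y - x).val ≠ 1 := fun hh => h1 ((sub_val_one hn).2 hh)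
    have n2 : (y - x).val ≠ n - 1 := fun hh => h2 ((sub_val_negone hn).2 hh)
    have n0 : (y - x).val ≠ 0 := by
      intro hh; exact hxy ((val_eq_zero_iff y x).1 hh).symm
    omega
  · rintro ⟨h1, h2⟩
    have hxy : x ≠ y := by
      intro hh
      rw [hh, sub_self, ZMod.val_zero] at h1; omega
    constructor
    · rw [Sym2.mk_isDiag_iff]; exact hxy
    · intro a ha b hb hab
      rw [Sym2.mem_iff] at ha hb
      have key : ∀ p q : ZMod n, p = x → q = y → p ≠ q → q ≠ p + 1 ∧ q ≠ p - 1 := by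
        rintro p q rfl rfl _
        constructor
        · intro hh; have := (sub_val_one hn).1 hh; omega
        · intro hh; have := (sub_val_negone hn).1 hh; omega
      have key2 : ∀ p q : ZMod n, p = y → q = x → p ≠ q → q ≠ p + 1 ∧ q ≠ p - 1 := by
        rintro p q rfl rfl _
        constructor
        · intro hh
          have := (sub_val_one hn).1 hh; omega
        · intro hh
          have := (sub_val_negone hn).1 hh; omega
      rcases ha with rfl | rfl <;> rcases hb with rfl | rfl
      · exact absurd rfl hab
      · exact key a b rfl rfl hab
      · exact key2 a b rfl rfl hab
      · exact absurd rfl hab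

lemma isChord_n_ge [NeZero n] {e : Sym2 (ZMod n)} (h : IsChord n e) : 4 ≤ n := by
  induction e using Sym2.ind with
  | _ x y =>
    rcases Nat.lt_or_ge n 2 with hn | hn
    · interval_cases n
      · exact absurd rfl (NeZero.ne 0)
      · exact absurd (Subsingleton.elim x y)
          (fun hh => h.1 (by rw [hh]; exact Sym2.mk_isDiag_iff.2 rfl))
    · have := (isChord_val hn x y).1 h
      omega

/-- a noncrossing family of chords -/
def Good (n : ℕ) (S : Finset (Sym2 (ZMod n))) : Prop :=
  (∀ e ∈ S, IsChord n e) ∧ ∀ e ∈ S, ∀ f ∈ S, e ≠ f → ¬ Crosses n e f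

/-- chord `r` is compatible with the family `S` -/
def Compat (n : ℕ) (r : Sym2 (ZMod n)) (S : Finset (Sym2 (ZMod n))) : Prop :=
  ∀ m ∈ S, ¬ Crosses n r m


/-! ### Contraction of one vertex -/

/-- delete vertex `v` and renumber: `x ↦ (x-v).val - 1`. -/
def ctr (v x : ZMod n) : ZMod (n - 1) := (((x - v).val - 1 : ℕ) : ZMod (n - 1))

/-- inverse of `ctr`. -/
def lif (v : ZMod n) (y : ZMod (n - 1)) : ZMod n := v + ((y.val + 1 : ℕ) : ZMod n)

section Ctr

variable [NeZero n] {v : ZMod n}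

lemma ctr_val (hn : 2 ≤ n) {x : ZMod n} (hx : x ≠ v) :
    (ctr v x).val = (x - v).val - 1 := by
  haveI : NeZero (n - 1) := ⟨by omega⟩
  have h0 : (x - v).val ≠ 0 := fun h => hx ((val_eq_zero_iff x v).1 h)
  have h1 : (x - v).val < n := ZMod.val_lt _
  exact ZMod.val_cast_of_lt (by omega)

lemma sub_ne_val {x : ZMod n} (hx : x ≠ v) : 1 ≤ (x - v).val := by
  have h0 : (x - v).val ≠ 0 := fun h => hx ((val_eq_zero_iff x v).1 h)
  omega

lemma ctr_inj (hn : 2 ≤ n) {x y : ZMod n} (hx : x ≠ v) (hy : y ≠ v)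
    (h : ctr v x = ctr v y) : x = y := by
  have := congrArg ZMod.val h
  rw [ctr_val hn hx, ctr_val hn hy] at this
  have h1 := sub_ne_val hx
  have h2 := sub_ne_val hy
  exact eq_of_val_sub_eq (c := v) (by omega)

lemma lif_sub_val (hn : 2 ≤ n) (y : ZMod (n - 1)) : (lif v y - v).val = y.val + 1 := by
  haveI : NeZero (n - 1) := ⟨by omega⟩
  have h1 : y.val < n - 1 := ZMod.val_lt _
  have : lif v y - v = ((y.val + 1 : ℕ) : ZMod n) := by rw [lif]; ring
  rw [this]
  exact ZMod.val_cast_of_lt (by omega)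

lemma lif_ne (hn : 2 ≤ n) (y : ZMod (n - 1)) : lif v y ≠ v := by
  intro h
  have := lif_sub_val (v := v) hn y
  rw [h, sub_self, ZMod.val_zero] at this
  omega

lemma ctr_lif (hn : 2 ≤ n) (y : ZMod (n - 1)) : ctr v (lif v y) = y := by
  haveI : NeZero (n - 1) := ⟨by omega⟩
  rw [ctr, lif_sub_val hn]
  have h1 : (y.val + 1 - 1 : ℕ) = y.val := by omega
  rw [h1, ZMod.natCast_val, ZMod.cast_id]

lemma lif_ctr (hn : 2 ≤ n) {x : ZMod n} (hx : x ≠ v) : lif v (ctr v x) = x := by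
  have h1 := sub_ne_val hx
  rw [lif, ctr_val hn hx]
  have : ((x - v).val - 1 + 1 : ℕ) = (x - v).val := by omega
  rw [this, ZMod.natCast_val, ZMod.cast_id]
  ring

/-- transfer of betweenness under contraction -/
lemma btw_ctr (hn : 2 ≤ n) {a x b : ZMod n} (ha : a ≠ v) (hx : x ≠ v) (hb : b ≠ v) :
    Btw (n - 1) (ctr v a) (ctr v x) (ctr v b) ↔ Btw n a x b := by
  haveI : NeZero (n - 1) := ⟨by omega⟩
  have sX := sub_spec (x - v) (a - v)
  have eX : (x - v) - (a - v) = x - a := by ring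
  rw [eX] at sX
  have sB := sub_spec (b - v) (a - v)
  have eB : (b - v) - (a - v) = b - a := by ring
  rw [eB] at sB
  have sX' := sub_spec (ctr v x) (ctr v a)
  have sB' := sub_spec (ctr v b) (ctr v a)
  rw [ctr_val hn hx, ctr_val hn ha] at sX'
  rw [ctr_val hn hb, ctr_val hn ha] at sB'
  have b1 := sub_ne_val ha
  have b2 := sub_ne_val hx
  have b3 := sub_ne_val hb
  have c1 : (a - v).val < n := ZMod.val_lt _
  have c2 : (x - v).val < n := ZMod.val_lt _
  have c3 : (b - v).val < n := ZMod.val_lt _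
  have c4 : (x - a).val < n := ZMod.val_lt _
  have c5 : (b - a).val < n := ZMod.val_lt _
  have c6 : (ctr v x - ctr v a).val < n - 1 := ZMod.val_lt _
  have c7 : (ctr v b - ctr v a).val < n - 1 := ZMod.val_lt _
  constructor
  · rintro ⟨h1, h2⟩; constructor <;> omega
  · rintro ⟨h1, h2⟩; constructor <;> omega

lemma isChord_ctr (hn : 4 ≤ n) {x y : ZMod n} (hx : x ≠ v) (hy : y ≠ v)
    (h : IsChord n s(x, y)) (hno : s(x, y) ≠ s(v - 1, v + 1)) :
    IsChord (n - 1) s(ctr v x, ctr v y) := by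
  haveI : NeZero (n - 1) := ⟨by omega⟩
  have hval := (isChord_val (by omega) x y).1 h
  rw [isChord_val (n := n - 1) (by omega)]
  have hno' : ¬ (((x - v).val = n - 1 ∧ (y - v).val = 1) ∨
      ((x - v).val = 1 ∧ (y - v).val = n - 1)) := by
    intro hc
    apply hno
    have k1 : (v - 1 - v).val = n - 1 := by
      have : v - 1 = v - 1 := rfl
      exact (sub_val_negone (by omega)).1 rfl
    have k2 : (v + 1 - v).val = 1 := by
      exact (sub_val_one (by omega)).1 rfl
    rcases hc with ⟨h1, h2⟩ | ⟨h1, h2⟩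
    · rw [Sym2.eq_iff]; left
      exact ⟨eq_of_val_sub_eq (c := v) (by rw [h1, k1]),
             eq_of_val_sub_eq (c := v) (by rw [h2, k2])⟩
    · rw [Sym2.eq_iff]; right
      exact ⟨eq_of_val_sub_eq (c := v) (by rw [h1, k2]),
             eq_of_val_sub_eq (c := v) (by rw [h2, k1])⟩
  have sX := sub_spec (y - v) (x - v)
  have eX : (y - v) - (x - v) = y - x := by ring
  rw [eX] at sX
  have sX' := sub_spec (ctr v y) (ctr v x)
  rw [ctr_val (by omega) hy, ctr_val (by omega) hx] at sX'
  have b1 := sub_ne_val hx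
  have b2 := sub_ne_val hy
  have c1 : (x - v).val < n := ZMod.val_lt _
  have c2 : (y - v).val < n := ZMod.val_lt _
  have c3 : (y - x).val < n := ZMod.val_lt _
  have c4 : (ctr v y - ctr v x).val < n - 1 := ZMod.val_lt _
  omega

lemma isChord_lif (hn : 4 ≤ n) (y₁ y₂ : ZMod (n - 1))
    (h : IsChord (n - 1) s(y₁, y₂)) : IsChord n s(lif v y₁, lif v y₂) := by
  haveI : NeZero (n - 1) := ⟨by omega⟩
  have hval := (isChord_val (n := n - 1) (by omega) y₁ y₂).1 h
  rw [isChord_val (by omega)]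
  have sS := sub_spec y₂ y₁
  have sB := sub_spec (lif v y₂ - v) (lif v y₁ - v)
  have eB : (lif v y₂ - v) - (lif v y₁ - v) = lif v y₂ - lif v y₁ := by ring
  rw [eB, lif_sub_val (by omega), lif_sub_val (by omega)] at sB
  have c1 : y₁.val < n - 1 := ZMod.val_lt _
  have c2 : y₂.val < n - 1 := ZMod.val_lt _
  have c3 : (y₂ - y₁).val < n - 1 := ZMod.val_lt _
  have c4 : (lif v y₂ - lif v y₁).val < n := ZMod.val_lt _
  omega

lemma mem_ne_of_avoid {e : Sym2 (ZMod n)} (he : ∀ z ∈ e, z ≠ v) :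
    ∀ x y, e = s(x, y) → x ≠ v ∧ y ≠ v := by
  intro x y hxy
  subst hxy
  exact ⟨he x (by simp), he y (by simp)⟩

lemma crosses_ctr (hn : 2 ≤ n) {e f : Sym2 (ZMod n)}
    (he : ∀ z ∈ e, z ≠ v) (hf : ∀ z ∈ f, z ≠ v) :
    Crosses (n - 1) (Sym2.map (ctr v) e) (Sym2.map (ctr v) f) ↔ Crosses n e f := by
  haveI : NeZero (n - 1) := ⟨by omega⟩
  constructor
  · intro h
    induction e using Sym2.ind with
    | _ x y =>
    induction f using Sym2.ind with
    | _ z w =>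
    obtain ⟨hx, hy⟩ := mem_ne_of_avoid he x y rfl
    obtain ⟨hz, hw⟩ := mem_ne_of_avoid hf z w rfl
    rw [Sym2.map_pair_eq, Sym2.map_pair_eq] at h
    obtain ⟨c, d, hcd, hchain⟩ := crosses_elim h rfl
    rw [Sym2.eq_iff] at hcd
    have key : ∀ c' d' : ZMod n, c' ≠ v → d' ≠ v →
        Chain (n - 1) (ctr v x) (ctr v c') (ctr v y) (ctr v d') →
        Crosses n s(x, y) s(c', d') := by
      intro c' d' hc' hd' hch
      rw [crosses_iff]
      refine ⟨x, y, c', d', rfl, rfl, ?_⟩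
      have h1 := (btw_ctr hn hx hc' hy).1 ⟨hch.1, hch.2.1⟩
      have h2 := (btw_ctr hn hy hd' hx).1 ⟨?_, ?_⟩
      · exact ((sep_iff x y c' d').1 ⟨h1, h2⟩)
      · -- 0 < (ctr d' - ctr y).val from chain
        obtain ⟨u1, u2, u3⟩ := chain_rotate (chain_rotate hch)
        exact u1
      · obtain ⟨u1, u2, u3⟩ := chain_rotate (chain_rotate hch)
        exact u2
    rcases hcd with ⟨hc, hd⟩ | ⟨hc, hd⟩
    · exact key z w hz hw (by rw [hc, hd]; exact hchain)
    · have hswap : s(w, z) = s(z, w) := Sym2.eq_swap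
      rw [← hswap]
      exact key w z hw hz (by rw [hd, hc]; exact hchain)
  · intro h
    obtain ⟨a, b, c, d, rfl, rfl, h1, h2⟩ := h
    obtain ⟨ha, hb⟩ := mem_ne_of_avoid he a b rfl
    obtain ⟨hc, hd⟩ := mem_ne_of_avoid hf c d rfl
    rw [Sym2.map_pair_eq, Sym2.map_pair_eq]
    exact ⟨ctr v a, ctr v b, ctr v c, ctr v d, rfl, rfl,
      (btw_ctr hn ha hc hb).2 h1, (btw_ctr hn hb hd ha).2 h2⟩

end Ctr


/-! ### Finset-level contraction -/

section CtrS

variable [NeZero n] {v : ZMod n} {S : Finset (Sym2 (ZMod n))}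

def ctrS (v : ZMod n) (S : Finset (Sym2 (ZMod n))) : Finset (Sym2 (ZMod (n - 1))) :=
  S.image (Sym2.map (ctr v))

lemma map_ctr_inj (hn : 2 ≤ n) {e f : Sym2 (ZMod n)}
    (he : ∀ z ∈ e, z ≠ v) (hf : ∀ z ∈ f, z ≠ v)
    (h : Sym2.map (ctr v) e = Sym2.map (ctr v) f) : e = f := by
  induction e using Sym2.ind with
  | _ x y =>
  induction f using Sym2.ind with
  | _ z w =>
  obtain ⟨hx, hy⟩ := mem_ne_of_avoid he x y rfl
  obtain ⟨hz, hw⟩ := mem_ne_of_avoid hf z w rfl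
  rw [Sym2.map_pair_eq, Sym2.map_pair_eq, Sym2.eq_iff] at h
  rw [Sym2.eq_iff]
  rcases h with ⟨h1, h2⟩ | ⟨h1, h2⟩
  · exact Or.inl ⟨ctr_inj hn hx hz h1, ctr_inj hn hy hw h2⟩
  · exact Or.inr ⟨ctr_inj hn hx hw h1, ctr_inj hn hy hz h2⟩

lemma card_ctrS (hn : 2 ≤ n) (hv : ∀ e ∈ S, ∀ z ∈ e, z ≠ v) :
    (ctrS v S).card = S.card := by
  apply Finset.card_image_of_injOn
  intro e heS f hfS h
  exact map_ctr_inj hn (hv e heS) (hv f hfS) h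

lemma mem_ctrS_iff (hn : 2 ≤ n) (hv : ∀ e ∈ S, ∀ z ∈ e, z ≠ v)
    {e : Sym2 (ZMod n)} (he : ∀ z ∈ e, z ≠ v) :
    Sym2.map (ctr v) e ∈ ctrS v S ↔ e ∈ S := by
  constructor
  · intro h
    obtain ⟨f, hfS, hfe⟩ := Finset.mem_image.1 h
    rwa [← map_ctr_inj hn (hv f hfS) he hfe]
  · intro h; exact Finset.mem_image_of_mem _ h

lemma good_ctrS (hn : 4 ≤ n) (hG : Good n S) (hv : ∀ e ∈ S, ∀ z ∈ e, z ≠ v)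
    (hno : ∀ e ∈ S, e ≠ s(v - 1, v + 1)) : Good (n - 1) (ctrS v S) := by
  constructor
  · intro e' he'
    obtain ⟨e, heS, rfl⟩ := Finset.mem_image.1 he'
    induction e using Sym2.ind with
    | _ x y =>
    obtain ⟨hx, hy⟩ := mem_ne_of_avoid (hv _ heS) x y rfl
    rw [Sym2.map_pair_eq]
    exact isChord_ctr hn hx hy (hG.1 _ heS) (hno _ heS)
  · intro e' he' f' hf' hne
    obtain ⟨e, heS, rfl⟩ := Finset.mem_image.1 he'
    obtain ⟨f, hfS, rfl⟩ := Finset.mem_image.1 hf'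
    have hef : e ≠ f := fun h => hne (by rw [h])
    rw [crosses_ctr (by omega) (hv _ heS) (hv _ hfS)]
    exact hG.2 e heS f hfS hef

lemma compat_ctrS (hn : 2 ≤ n) {r : Sym2 (ZMod n)} (hr : ∀ z ∈ r, z ≠ v)
    (hv : ∀ e ∈ S, ∀ z ∈ e, z ≠ v) (hc : Compat n r S) :
    Compat (n - 1) (Sym2.map (ctr v) r) (ctrS v S) := by
  intro m' hm'
  obtain ⟨m, hmS, rfl⟩ := Finset.mem_image.1 hm'
  rw [crosses_ctr hn hr (hv _ hmS)]
  exact hc m hmS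

end CtrS

/-! ### Minimal chords -/

section Min

variable [NeZero n]

def wt : Sym2 (ZMod n) → ℕ :=
  Sym2.lift ⟨fun a b => min ((b - a).val) ((a - b).val), by intro a b; simp [min_comm]⟩

lemma wt_le {e : Sym2 (ZMod n)} {x y : ZMod n} (h : e = s(x, y)) : wt e ≤ (y - x).val := by
  rw [h, wt, Sym2.lift_mk]
  exact min_le_left _ _

lemma wt_orient (e : Sym2 (ZMod n)) : ∃ a b, e = s(a, b) ∧ (b - a).val = wt e := by
  induction e using Sym2.ind with
  | _ x y =>
  rcases le_total ((y - x).val) ((x - y).val) with h | h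
  · exact ⟨x, y, rfl, by rw [wt, Sym2.lift_mk]; dsimp only; exact (min_eq_left h).symm⟩
  · exact ⟨y, x, Sym2.eq_swap.symm, by rw [wt, Sym2.lift_mk]; dsimp only; exact (min_eq_right h).symm⟩

lemma crosses_of_chain {a b c d : ZMod n} (h : Chain n a c b d) :
    Crosses n s(a, b) s(c, d) := (crosses_iff _ _).2 ⟨a, b, c, d, rfl, rfl, h⟩

lemma short_orient {a b x y : ZMod n} (hxy : x ≠ y)
    (hx : (x - a).val ≤ (b - a).val) (hy : (y - a).val ≤ (b - a).val)
    (hne : s(x, y) ≠ s(a, b)) :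
    ∃ p q, s(p, q) = s(x, y) ∧ (q - p).val < (b - a).val := by
  have key : ∀ x' y' : ZMod n, (x' - a).val < (y' - a).val →
      (y' - a).val ≤ (b - a).val → s(x', y') ≠ s(a, b) →
      (y' - x').val < (b - a).val := by
    intro x' y' hlt hle hne'
    have s1 := sub_spec (y' - a) (x' - a)
    have e1 : (y' - a) - (x' - a) = y' - x' := by ring
    rw [e1] at s1
    have c1 : (y' - x').val < n := ZMod.val_lt _
    have c2 : (y' - a).val < n := ZMod.val_lt _
    have hval : (y' - x').val = (y' - a).val - (x' - a).val := by omega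
    rcases Nat.lt_or_ge ((y' - x').val) ((b - a).val) with h | h
    · exact h
    · exfalso
      have hx0 : (x' - a).val = 0 := by omega
      have hyk : (y' - a).val = (b - a).val := by omega
      have hxa : x' = a := (val_eq_zero_iff _ _).1 hx0
      have hyb : y' = b := eq_of_val_sub_eq hyk
      exact hne' (by rw [hxa, hyb])
  have hvne : (x - a).val ≠ (y - a).val := fun h => hxy (eq_of_val_sub_eq h)
  rcases Nat.lt_or_ge ((x - a).val) ((y - a).val) with h | h
  · exact ⟨x, y, rfl, key x y h hy hne⟩
  · refine ⟨y, x, Sym2.eq_swap, key y x (by omega) hx ?_⟩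
    intro hh
    rw [← Sym2.eq_swap] at hh
    exact hne hh

/-- If `m` is a chord not crossing `s(a,b)`, not equal to it, at least as long as it,
then no endpoint of `m` lies strictly inside the arc `(a,b)`. -/
lemma not_btw_of_compat {a b : ZMod n} {m : Sym2 (ZMod n)} (hmc : IsChord n m)
    (hnc : ¬ Crosses n s(a, b) m) (hme : m ≠ s(a, b))
    (hmin : ∀ x y, m = s(x, y) → (b - a).val ≤ (y - x).val)
    {z : ZMod n} (hz : z ∈ m) : ¬ Btw n a z b := by
  intro hbtw
  obtain ⟨u1, u2⟩ := hbtw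
  set w := Sym2.Mem.other hz with hw
  have hmzw : m = s(z, w) := (Sym2.other_spec hz).symm
  have hzw : z ≠ w := by
    intro hh
    exact hmc.1 (by rw [hmzw, ← hh]; exact Sym2.mk_isDiag_iff.2 rfl)
  have hwle : (w - a).val ≤ (b - a).val := by
    by_contra hgt
    apply hnc
    rw [hmzw]
    exact crosses_of_chain ⟨u1, u2, by omega⟩
  obtain ⟨p, q, hpq, hlt⟩ := short_orient hzw (le_of_lt u2) hwle (by rw [← hmzw]; exact hme)
  have := hmin p q (by rw [hmzw, ← hpq])
  omega

end Min


lemma good_subset {S T : Finset (Sym2 (ZMod n))} (h : Good n S) (hsub : T ⊆ S) :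
    Good n T :=
  ⟨fun e he => h.1 e (hsub he), fun e he f hf hne => h.2 e (hsub he) f (hsub hf) hne⟩

lemma min_setup [NeZero n] {S : Finset (Sym2 (ZMod n))} (hG : Good n S) (hne : S.Nonempty) :
    ∃ e ∈ S, ∃ a b : ZMod n, e = s(a, b) ∧
      (∀ f ∈ S, ∀ x y : ZMod n, f = s(x, y) → (b - a).val ≤ (y - x).val) ∧
      (∀ m ∈ S, m ≠ e → ∀ z ∈ m, ¬ Btw n a z b) := by
  obtain ⟨e, heS, hmin⟩ := S.exists_min_image wt hne
  obtain ⟨a, b, hab, hwt⟩ := wt_orient e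
  refine ⟨e, heS, a, b, hab, ?_, ?_⟩
  · intro f hf x y hxy
    calc (b - a).val = wt e := hwt
    _ ≤ wt f := hmin f hf
    _ ≤ (y - x).val := wt_le hxy
  · intro m hm hme z hz
    refine not_btw_of_compat (hG.1 m hm) ?_ (by rw [← hab]; exact hme) ?_ hz
    · rw [← hab]; exact hG.2 e heS m hm (Ne.symm hme)
    · intro x y hxy
      calc (b - a).val = wt e := hwt
      _ ≤ wt m := hmin m hm
      _ ≤ (y - x).val := wt_le hxy

lemma btw_add_one [NeZero n] {a b : ZMod n} (h : 2 ≤ (b - a).val) : Btw n a (a + 1) b := by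
  have h4 : 2 < n := by have := ZMod.val_lt (b - a); omega
  constructor <;> rw [add_sub_cancel_left, val_one'' (by omega)] <;> omega

lemma btw_add_two [NeZero n] {a b : ZMod n} (h : 3 ≤ (b - a).val) : Btw n a (a + 2) b := by
  have h4 : 3 < n := by have := ZMod.val_lt (b - a); omega
  constructor <;> rw [add_sub_cancel_left, val_two'' (by omega)] <;> omega

lemma ne_v_left [NeZero n] {a b : ZMod n} (h : 1 ≤ (b - a).val) : a ≠ a + 1 := by
  intro hh
  have h2 : 1 < n := by have := ZMod.val_lt (b - a); omega
  have := congrArg (fun x => (x - a).val) hh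
  simp only [sub_self, add_sub_cancel_left, ZMod.val_zero] at this
  rw [val_one'' h2] at this; omega

lemma ne_v_right [NeZero n] {a b : ZMod n} (h : 2 ≤ (b - a).val) : b ≠ a + 1 := by
  intro hh
  have h2 : 1 < n := by have := ZMod.val_lt (b - a); omega
  have := congrArg (fun x => (x - a).val) hh
  simp only [add_sub_cancel_left] at this
  rw [val_one'' h2] at this; omega

/-- **Upper bound**: a noncrossing family of chords of the `n`-gon has
at most `n - 3` elements. -/
lemma good_card : ∀ (n : ℕ), 3 ≤ n → ∀ (S : Finset (Sym2 (ZMod n))), Good n S →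
    S.card + 3 ≤ n := by
  intro n
  induction n using Nat.strong_induction_on with
  | _ n IH =>
  intro hn S hG
  haveI : NeZero n := ⟨by omega⟩
  rcases S.eq_empty_or_nonempty with rfl | hne
  · simpa using hn
  · obtain ⟨f0, hf0⟩ := hne
    have hn4 : 4 ≤ n := isChord_n_ge (hG.1 f0 hf0)
    obtain ⟨e, heS, a, b, hab, hmin, hfree⟩ := min_setup hG ⟨f0, hf0⟩
    obtain ⟨hk2, hkn⟩ := (isChord_val (by omega) a b).1 (hab ▸ hG.1 e heS)
    set v := a + 1 with hv
    have hva : a ≠ v := ne_v_left (b := b) (by omega)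
    have hvb : b ≠ v := ne_v_right (by omega)
    have hbtwv : Btw n a v b := btw_add_one hk2
    have havoid : ∀ m ∈ S, m ≠ e → ∀ z ∈ m, z ≠ v := by
      intro m hm hme z hz heq
      exact hfree m hm hme z hz (heq ▸ hbtwv)
    have hvm1 : v - 1 = a := by rw [hv]; ring
    rcases Nat.lt_or_ge ((b - a).val) 3 with hk3 | hk3
    · -- k = 2 : e becomes a side
      have hb2 : b = a + 2 := by
        have hvt : (b - a).val = ((a + 2 : ZMod n) - a).val := by
          rw [add_sub_cancel_left, val_two'' (by omega)]; omega
        exact eq_of_val_sub_eq hvt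
      have hee : e = s(v - 1, v + 1) := by
        rw [hab, hvm1, hb2, hv]; ring_nf
      have havoid' : ∀ m ∈ S.erase e, ∀ z ∈ m, z ≠ v := by
        intro m hm z hz
        obtain ⟨hme, hmS⟩ := Finset.mem_erase.1 hm
        exact havoid m hmS hme z hz
      have hG' : Good (n - 1) (ctrS v (S.erase e)) := by
        apply good_ctrS hn4 (good_subset hG (Finset.erase_subset _ _)) havoid'
        intro m hm
        rw [← hee]
        exact (Finset.mem_erase.1 hm).1
      have hcard := card_ctrS (v := v) (S := S.erase e) (by omega) havoid'
      have hIH := IH (n - 1) (by omega) (by omega) _ hG'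
      rw [hcard, Finset.card_erase_of_mem heS] at hIH
      have hpos : 1 ≤ S.card := Finset.card_pos.2 ⟨e, heS⟩
      omega
    · -- k ≥ 3 : v is an unused interior vertex
      have hbtw2 : Btw n a (a + 2) b := btw_add_two hk3
      have havoid2 : ∀ m ∈ S, ∀ z ∈ m, z ≠ v := by
        intro m hm z hz
        rcases eq_or_ne m e with rfl | hme
        · rw [hab] at hz
          rcases Sym2.mem_iff.1 hz with rfl | rfl
          · exact hva
          · exact hvb
        · exact havoid m hm hme z hz
      have hno : ∀ m ∈ S, m ≠ s(v - 1, v + 1) := by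
        intro m hm hmeq
        have hv1 : v + 1 = a + 2 := by rw [hv]; ring
        rw [hvm1, hv1] at hmeq
        rcases eq_or_ne m e with rfl | hme
        · rw [hab, Sym2.eq_iff] at hmeq
          rcases hmeq with ⟨_, hb⟩ | ⟨ha2, _⟩
          · rw [hb, add_sub_cancel_left, val_two'' (by omega)] at hk3
            omega
          · have := congrArg (fun x => (x - a).val) ha2
            simp only [sub_self, add_sub_cancel_left, ZMod.val_zero] at this
            rw [val_two'' (by omega)] at this
            omega
        · have hz : a + 2 ∈ m := by rw [hmeq]; simp
          exact hfree m hm hme _ hz hbtw2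
      have hG' : Good (n - 1) (ctrS v S) := good_ctrS hn4 hG havoid2 hno
      have hcard := card_ctrS (v := v) (S := S) (by omega) havoid2
      have hIH := IH (n - 1) (by omega) (by omega) _ hG'
      omega


section Ext

lemma ne_of_val_sub_ne [NeZero n] {x y : ZMod n} (h : (y - x).val ≠ 0) : x ≠ y :=
  fun hh => h (by rw [hh, sub_self, ZMod.val_zero])

/-- a "short" chord `s(p,q)` with gap 2 can only be crossed by chords through
the midpoint `p + 1`. -/
lemma no_cross_of_avoid_mid [NeZero n] {p q : ZMod n} (h2 : (q - p).val = 2)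
    {f : Sym2 (ZMod n)} (hf : ∀ z ∈ f, z ≠ p + 1) : ¬ Crosses n s(p, q) f := by
  intro h
  obtain ⟨c, d, hcd, hchain⟩ := crosses_elim h rfl
  obtain ⟨u1, u2, u3⟩ := hchain
  rw [h2] at u2
  have hc1 : (c - p).val = 1 := by omega
  have hn2 : 2 ≤ n := by have := ZMod.val_lt (q - p); omega
  have : c = p + 1 := (sub_val_one hn2).2 hc1
  exact hf c (by rw [hcd]; simp) this

variable [NeZero n] {v : ZMod n}

lemma map_ctr_map_lif (hn : 2 ≤ n) (f' : Sym2 (ZMod (n - 1))) :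
    Sym2.map (ctr v) (Sym2.map (lif v) f') = f' := by
  induction f' using Sym2.ind with
  | _ x y => rw [Sym2.map_pair_eq, Sym2.map_pair_eq, ctr_lif hn, ctr_lif hn]

lemma isChord_map_lif (hn : 4 ≤ n) {f' : Sym2 (ZMod (n - 1))}
    (h : IsChord (n - 1) f') : IsChord n (Sym2.map (lif v) f') := by
  induction f' using Sym2.ind with
  | _ x y => rw [Sym2.map_pair_eq]; exact isChord_lif hn x y h

lemma avoid_map_lif (hn : 2 ≤ n) (f' : Sym2 (ZMod (n - 1))) :
    ∀ z ∈ Sym2.map (lif v) f', z ≠ v := by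
  induction f' using Sym2.ind with
  | _ x y =>
    intro z hz
    rw [Sym2.map_pair_eq, Sym2.mem_iff] at hz
    rcases hz with rfl | rfl <;> exact lif_ne hn _

lemma image_mid_not_chord (hn : 4 ≤ n) :
    ¬ IsChord (n - 1) (Sym2.map (ctr v) s(v - 1, v + 1)) := by
  haveI : NeZero (n - 1) := ⟨by omega⟩
  intro h
  rw [Sym2.map_pair_eq] at h
  have h1 : (v - 1 - v).val = n - 1 := (sub_val_negone (by omega)).1 rfl
  have h2 : (v + 1 - v).val = 1 := (sub_val_one (by omega)).1 rfl
  have hv1 : v - 1 ≠ v := by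
    intro hh; rw [hh, sub_self, ZMod.val_zero] at h1; omega
  have hv2 : v + 1 ≠ v := by
    intro hh; rw [hh, sub_self, ZMod.val_zero] at h2; omega
  have c1 : (ctr v (v - 1)).val = n - 2 := by rw [ctr_val (by omega) hv1, h1]; omega
  have c2 : (ctr v (v + 1)).val = 0 := by rw [ctr_val (by omega) hv2, h2]
  obtain ⟨hh1, hh2⟩ := (isChord_val (n := n - 1) (by omega) _ _).1 h
  have hs := sub_spec (ctr v (v + 1)) (ctr v (v - 1))
  rw [c1, c2] at hs
  have := ZMod.val_lt (ctr v (v + 1) - ctr v (v - 1))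
  omega

/-- **Extension**: any noncrossing family with at most `n - 4` chords admits two
distinct compatible chords outside the family. -/
lemma exists_two_ext : ∀ (n : ℕ), 4 ≤ n → ∀ (S : Finset (Sym2 (ZMod n))), Good n S →
    S.card + 4 ≤ n →
    ∃ f g : Sym2 (ZMod n), f ≠ g ∧ IsChord n f ∧ IsChord n g ∧ f ∉ S ∧ g ∉ S ∧
      Compat n f S ∧ Compat n g S := by
  intro n
  induction n using Nat.strong_induction_on with
  | _ n IH =>
  intro hn S hG hcard
  haveI : NeZero n := ⟨by omega⟩
  rcases S.eq_empty_or_nonempty with rfl | hne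
  · refine ⟨s(0, 2), s(1, 3), ?_, ?_, ?_, by simp, by simp, by intro m hm; simp at hm,
      by intro m hm; simp at hm⟩
    · intro hh
      rw [Sym2.eq_iff] at hh
      rcases hh with ⟨h1, h2⟩ | ⟨h1, h2⟩
      · exact ne_of_val_sub_ne (by rw [sub_zero, val_one'' (by omega)]; omega) h1
      · exact ne_of_val_sub_ne (by rw [sub_zero, val_three'' (by omega)]; omega) h1
    · rw [isChord_val (by omega)]
      rw [sub_zero, val_two'' (by omega)]
      omega
    · rw [isChord_val (by omega)]
      have h31 : (3 : ZMod n) - 1 = 2 := by ring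
      rw [h31, val_two'' (by omega)]
      omega
  · obtain ⟨f0, hf0⟩ := hne
    obtain ⟨e, heS, a, b, hab, hmin, hfree⟩ := min_setup hG ⟨f0, hf0⟩
    obtain ⟨hk2, hkn⟩ := (isChord_val (by omega) a b).1 (hab ▸ hG.1 e heS)
    have hSpos : 1 ≤ S.card := Finset.card_pos.2 ⟨e, heS⟩
    rcases Nat.lt_or_ge ((b - a).val) 3 with hk3 | hk3
    · -- minimal chord has gap 2 : contract its midpoint
      have hva : a ≠ a + 1 := ne_v_left (b := b) (by omega)
      have hvb : b ≠ a + 1 := ne_v_right (by omega)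
      have hbtwv : Btw n a (a + 1) b := btw_add_one hk2
      set v := a + 1 with hv
      have hvm1 : v - 1 = a := by rw [hv]; ring
      have hb2 : b = v + 1 := by
        have hvt : (b - a).val = ((a + 2 : ZMod n) - a).val := by
          rw [add_sub_cancel_left, val_two'' (by omega)]; omega
        have := eq_of_val_sub_eq hvt
        rw [this, hv]; ring
      have hee : e = s(v - 1, v + 1) := by rw [hab, hvm1, hb2]
      have hgap : ((v + 1 : ZMod n) - (v - 1)).val = 2 := by
        have hq : (v + 1 : ZMod n) - (v - 1) = 2 := by ring
        rw [hq, val_two'' (by omega)]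
      have havoid' : ∀ m ∈ S.erase e, ∀ z ∈ m, z ≠ v := by
        intro m hm z hz heq
        obtain ⟨hme, hmS⟩ := Finset.mem_erase.1 hm
        exact hfree m hmS hme z hz (heq ▸ hbtwv)
      have hG' : Good (n - 1) (ctrS v (S.erase e)) := by
        apply good_ctrS (by omega) (good_subset hG (Finset.erase_subset _ _)) havoid'
        intro m hm
        rw [← hee]
        exact (Finset.mem_erase.1 hm).1
      have hcard' := card_ctrS (v := v) (S := S.erase e) (by omega) havoid'
      rw [Finset.card_erase_of_mem heS] at hcard'
      obtain ⟨f', g', hfg', hfc', hgc', hfS', hgS', hfcmp', hgcmp'⟩ :=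
        IH (n - 1) (by omega) (by omega) (ctrS v (S.erase e)) hG' (by omega)
      have main : ∀ f' : Sym2 (ZMod (n - 1)), IsChord (n - 1) f' →
          f' ∉ ctrS v (S.erase e) → Compat (n - 1) f' (ctrS v (S.erase e)) →
          (Sym2.map (lif v) f' ∉ S ∧ Compat n (Sym2.map (lif v) f') S) := by
        intro f' hfc' hfS' hfcmp'
        constructor
        · intro hmem
          rcases eq_or_ne (Sym2.map (lif v) f') e with heq | hne2
          · exact image_mid_not_chord (v := v) (by omega)
              (by rw [← hee, ← heq, map_ctr_map_lif (by omega)]; exact hfc')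
          · exact hfS' (by
              rw [← map_ctr_map_lif (v := v) (by omega) f']
              exact Finset.mem_image_of_mem _ (Finset.mem_erase.2 ⟨hne2, hmem⟩))
        · intro m hm
          rcases eq_or_ne m e with rfl | hme
          · rw [hee]
            intro hcr
            have hx : ∀ z ∈ Sym2.map (lif v) f', z ≠ (v - 1) + 1 := by
              intro z hz
              have hq : (v - 1) + 1 = v := by ring
              rw [hq]
              exact avoid_map_lif (by omega) f' z hz
            exact no_cross_of_avoid_mid hgap hx (crosses_symm hcr)
          · intro hcr
            have h1 : Crosses (n - 1) f' (Sym2.map (ctr v) m) := by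
              have h2 := (crosses_ctr (by omega) (avoid_map_lif (v := v) (by omega) f')
                (havoid' m (Finset.mem_erase.2 ⟨hme, hm⟩))).2 hcr
              rwa [map_ctr_map_lif (by omega)] at h2
            exact hfcmp' _ (Finset.mem_image_of_mem _ (Finset.mem_erase.2 ⟨hme, hm⟩)) h1
      obtain ⟨hf1, hf2⟩ := main f' hfc' hfS' hfcmp'
      obtain ⟨hg1, hg2⟩ := main g' hgc' hgS' hgcmp'
      refine ⟨Sym2.map (lif v) f', Sym2.map (lif v) g', ?_, isChord_map_lif (by omega) hfc',
        isChord_map_lif (by omega) hgc', hf1, hg1, hf2, hg2⟩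
      intro hh
      apply hfg'
      rw [← map_ctr_map_lif (v := v) (by omega) f', hh, map_ctr_map_lif (by omega)]
    · -- minimal gap ≥ 3 : two explicit chords strictly inside the arc
      have hn5 : 5 ≤ n := by omega
      have hbtw1 : Btw n a (a + 1) b := btw_add_one hk2
      have hbtw2 : Btw n a (a + 2) b := btw_add_two hk3
      have hgapf : ((a + 2 : ZMod n) - a).val = 2 := by
        rw [add_sub_cancel_left, val_two'' (by omega)]
      have hgapg : ((a + 3 : ZMod n) - (a + 1)).val = 2 := by
        have hq : (a + 3 : ZMod n) - (a + 1) = 2 := by ring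
        rw [hq, val_two'' (by omega)]
      -- no chord of S contains a+1 or a+2
      have hav : ∀ m ∈ S, ∀ z ∈ m, z ≠ a + 1 ∧ z ≠ a + 2 := by
        intro m hm z hz
        rcases eq_or_ne m e with rfl | hme
        · rw [hab] at hz
          rcases Sym2.mem_iff.1 hz with rfl | rfl
          · constructor
            · exact ne_v_left (b := b) (by omega)
            · intro hh
              have := congrArg (fun x => (x - z).val) hh
              simp only [sub_self, add_sub_cancel_left, ZMod.val_zero] at this
              rw [val_two'' (by omega)] at this
              omega
          · constructor
            · exact ne_v_right (by omega)
            · intro hh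
              rw [hh, add_sub_cancel_left, val_two'' (by omega)] at hk3
              omega
        · constructor <;> intro hh
          · exact hfree m hm hme z hz (hh ▸ hbtw1)
          · exact hfree m hm hme z hz (hh ▸ hbtw2)
      refine ⟨s(a, a + 2), s(a + 1, a + 3), ?_, ?_, ?_, ?_, ?_, ?_, ?_⟩
      · intro hh
        rw [Sym2.eq_iff] at hh
        rcases hh with ⟨h1, _⟩ | ⟨h1, h2⟩
        · exact ne_v_left (b := b) (by omega) h1
        · refine ne_of_val_sub_ne (x := a) (y := a + 3) ?_ h1
          rw [add_sub_cancel_left, val_three'' ?_]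
          · omega
          · by_contra hc
            have h4 : n = 4 := by omega
            omega
      · rw [isChord_val (by omega), hgapf]; omega
      · rw [isChord_val (by omega), hgapg]; omega
      · intro hmem
        have hz : a + 2 ∈ s(a, a + 2) := by simp
        exact (hav _ hmem _ hz).2 rfl
      · intro hmem
        have hz : a + 1 ∈ s(a + 1, a + 3) := by simp
        exact (hav _ hmem _ hz).1 rfl
      · intro m hm hcr
        exact no_cross_of_avoid_mid hgapf (fun z hz => (hav m hm z hz).1) hcr
      · intro m hm hcr
        have hx : ∀ z ∈ m, z ≠ (a + 1) + 1 := by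
          intro z hz hh
          exact (hav m hm z hz).2 (by rw [hh]; ring)
        exact no_cross_of_avoid_mid hgapg hx hcr

end Ext


section Three

variable [NeZero n]

/-- base-shift: `(x - (a + 1)).val` in terms of `(x - a).val`. -/
lemma shift_one (hn : 2 ≤ n) (a x : ZMod n) :
    (x - (a + 1)).val + 1 = (x - a).val ∨ (x - (a + 1)).val + 1 = (x - a).val + n := by
  have s := sub_spec (x - a) (1 : ZMod n)
  have h1 : (x - a) - 1 = x - (a + 1) := by ring
  rw [h1, val_one'' hn] at s
  exact s

lemma shift_two (hn : 3 ≤ n) (a x : ZMod n) :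
    (x - (a + 2)).val + 2 = (x - a).val ∨ (x - (a + 2)).val + 2 = (x - a).val + n := by
  have s := sub_spec (x - a) (2 : ZMod n)
  have h1 : (x - a) - 2 = x - (a + 2) := by ring
  rw [h1, val_two'' (by omega)] at s
  exact s

/-- the k = 3 case of the three-crossing lemma -/
lemma aux3 (hn : 5 ≤ n) {S : Finset (Sym2 (ZMod n))} (hG : Good n S)
    {a d₁ d₂ : ZMod n}
    (hD₁ : 3 < (d₁ - a).val) (hD₂ : 3 < (d₂ - a).val)
    (hfg : Crosses n s(a + 1, d₁) s(a + 2, d₂))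
    (hCf : Compat n s(a + 1, d₁) S) (hCg : Compat n s(a + 2, d₂) S)
    (heS : s(a, a + 3) ∉ S)
    (hSav : ∀ m ∈ S, ∀ z ∈ m, ¬ Btw n a z (a + 3)) :
    S.card + 5 ≤ n := by
  have hv1 : ((a + 1 : ZMod n) - a).val = 1 := by
    rw [add_sub_cancel_left, val_one'' (by omega)]
  have hv2 : ((a + 2 : ZMod n) - a).val = 2 := by
    rw [add_sub_cancel_left, val_two'' (by omega)]
  have hv3 : ((a + 3 : ZMod n) - a).val = 3 := by
    rw [add_sub_cancel_left, val_three'' (by omega)]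
  have hD₁n : (d₁ - a).val < n := ZMod.val_lt _
  have hD₂n : (d₂ - a).val < n := ZMod.val_lt _
  -- from f crosses g : D₁ < D₂
  have hDlt : (d₁ - a).val < (d₂ - a).val := by
    obtain ⟨p, q, hpq, hchain⟩ := crosses_elim hfg rfl
    obtain ⟨u1, u2, u3⟩ := hchain
    have s2 := shift_one (by omega) a (a + 2)
    have sp := shift_one (by omega) a p
    have sq := shift_one (by omega) a q
    have sd := shift_one (by omega) a d₁
    rw [hv2] at s2
    rw [Sym2.eq_iff] at hpq
    have hpn : (p - (a + 1)).val < n := ZMod.val_lt _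
    have hqn : (q - (a + 1)).val < n := ZMod.val_lt _
    have hdn : (d₁ - (a + 1)).val < n := ZMod.val_lt _
    rcases hpq with ⟨hp, hq⟩ | ⟨hp, hq⟩
    · subst hp; subst hq
      have sp2 := shift_one (by omega) a (a + 2)
      rw [hv2] at sp2
      omega
    · subst hp; subst hq
      have sp2 := shift_one (by omega) a (a + 2)
      rw [hv2] at sp2
      omega
  -- the replacement chord r = s(a, d₁)
  have hrc : IsChord n s(a, d₁) := by
    rw [isChord_val (by omega)]
    omega
  have hrg : Crosses n s(a, d₁) s(a + 2, d₂) :=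
    crosses_of_chain ⟨by omega, by omega, by omega⟩
  have hrS : s(a, d₁) ∉ S := fun hmem => hCg _ hmem (crosses_symm hrg)
  have hrCompat : Compat n s(a, d₁) S := by
    intro m hm hcr
    obtain ⟨p, q, hpq, hchain⟩ := crosses_elim hcr rfl
    obtain ⟨u1, u2, u3⟩ := hchain
    have hP3 : 3 ≤ (p - a).val := by
      have := hSav m hm p (by rw [hpq]; simp)
      rw [Btw, hv3] at this
      omega
    apply hCf m hm
    rw [hpq]
    apply crosses_of_chain
    have sp := shift_one (by omega) a p
    have sq := shift_one (by omega) a q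
    have sd := shift_one (by omega) a d₁
    have hpn : (p - (a + 1)).val < n := ZMod.val_lt _
    have hqn : (q - (a + 1)).val < n := ZMod.val_lt _
    have hdn : (d₁ - (a + 1)).val < n := ZMod.val_lt _
    have hqan : (q - a).val < n := ZMod.val_lt _
    exact ⟨by omega, by omega, by omega⟩
  -- avoidance facts
  have hSav1 : ∀ m ∈ S, ∀ z ∈ m, z ≠ a + 1 := by
    intro m hm z hz hh
    exact hSav m hm z hz (by rw [hh, Btw, hv1, hv3]; omega)
  have hSav2 : ∀ m ∈ S, ∀ z ∈ m, z ≠ a + 2 := by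
    intro m hm z hz hh
    exact hSav m hm z hz (by rw [hh, Btw, hv2, hv3]; omega)
  -- now contract U = insert r S at v₁ = a+2 and then at the image of a+1
  haveI : NeZero (n - 1) := ⟨by omega⟩
  have hdne1 : d₁ ≠ a + 1 := fun hh => by rw [hh, hv1] at hD₁; omega
  have hdne2 : d₁ ≠ a + 2 := fun hh => by rw [hh, hv2] at hD₁; omega
  have hdne3 : d₁ ≠ a + 3 := fun hh => by rw [hh, hv3] at hD₁; omega
  have hana : a ≠ a + 1 := fun hh => by
    have := congrArg (fun x => (x - a).val) hh
    simp only [sub_self, ZMod.val_zero] at this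
    rw [hv1] at this; omega
  have hana2 : a ≠ a + 2 := fun hh => by
    have := congrArg (fun x => (x - a).val) hh
    simp only [sub_self, ZMod.val_zero] at this
    rw [hv2] at this; omega
  have hana3 : a ≠ a + 3 := fun hh => by
    have := congrArg (fun x => (x - a).val) hh
    simp only [sub_self, ZMod.val_zero] at this
    rw [hv3] at this; omega
  have h12 : (a + 1 : ZMod n) ≠ a + 2 := fun hh => by
    have := congrArg (fun x => (x - a).val) hh
    rw [hv1, hv2] at this; omega
  have h32 : (a + 3 : ZMod n) ≠ a + 2 := fun hh => by
    have := congrArg (fun x => (x - a).val) hh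
    rw [hv3, hv2] at this; omega
  set r := s(a, d₁) with hr
  set U := insert r S with hU
  have hGU : Good n U := by
    constructor
    · intro m hm
      rcases Finset.mem_insert.1 hm with rfl | hm
      · exact hrc
      · exact hG.1 m hm
    · intro m hm m' hm' hne
      rcases Finset.mem_insert.1 hm with rfl | hm <;>
        rcases Finset.mem_insert.1 hm' with rfl | hm'
      · exact absurd rfl hne
      · exact hrCompat m' hm'
      · exact fun hc => hrCompat m hm (crosses_symm hc)
      · exact hG.2 m hm m' hm' hne
  have hUcard : U.card = S.card + 1 := Finset.card_insert_of_notMem hrS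
  have havU1 : ∀ m ∈ U, ∀ z ∈ m, z ≠ a + 1 := by
    intro m hm z hz
    rcases Finset.mem_insert.1 hm with rfl | hm
    · rw [hr, Sym2.mem_iff] at hz
      rcases hz with rfl | rfl
      · exact hana
      · exact hdne1
    · exact hSav1 m hm z hz
  have havU2 : ∀ m ∈ U, ∀ z ∈ m, z ≠ a + 2 := by
    intro m hm z hz
    rcases Finset.mem_insert.1 hm with rfl | hm
    · rw [hr, Sym2.mem_iff] at hz
      rcases hz with rfl | rfl
      · exact hana2
      · exact hdne2
    · exact hSav2 m hm z hz
  have hUe : ∀ m ∈ U, m ≠ s(a, a + 3) := by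
    intro m hm hh
    rcases Finset.mem_insert.1 hm with rfl | hm
    · rw [hr, Sym2.eq_iff] at hh
      rcases hh with ⟨_, h2⟩ | ⟨h2, _⟩
      · exact hdne3 h2
      · exact hana3 h2
    · rw [hh] at hm
      exact heS hm
  set v₁ : ZMod n := a + 2 with hv₁
  have hno1 : ∀ m ∈ U, m ≠ s(v₁ - 1, v₁ + 1) := by
    intro m hm hh
    have e1 : v₁ - 1 = a + 1 := by rw [hv₁]; ring
    have e2 : v₁ + 1 = a + 3 := by rw [hv₁]; ring
    rw [e1, e2] at hh
    have : (a + 1 : ZMod n) ∈ m := by rw [hh]; simp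
    exact havU1 m hm _ this rfl
  set U₁ := ctrS v₁ U with hU₁
  have hGU₁ : Good (n - 1) U₁ := good_ctrS (by omega) hGU havU2 hno1
  have hU₁card : U₁.card = S.card + 1 := by
    rw [hU₁, card_ctrS (by omega) havU2, hUcard]
  -- second contraction
  set v₂ : ZMod (n - 1) := ctr v₁ (a + 1) with hv₂
  -- value computations
  have hsa : (a - v₁).val = n - 2 := by
    have := shift_two (by omega) a a
    rw [sub_self, ZMod.val_zero, ← hv₁] at this
    have hb := ZMod.val_lt (a - v₁)
    omega
  have hsa1 : ((a + 1 : ZMod n) - v₁).val = n - 1 := by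
    have := shift_two (by omega) a (a + 1)
    rw [hv1, ← hv₁] at this
    have hb := ZMod.val_lt ((a + 1 : ZMod n) - v₁)
    omega
  have hsa3 : ((a + 3 : ZMod n) - v₁).val = 1 := by
    have := shift_two (by omega) a (a + 3)
    rw [hv3, ← hv₁] at this
    have hb := ZMod.val_lt ((a + 3 : ZMod n) - v₁)
    omega
  have hca : (ctr v₁ a).val = n - 3 := by
    rw [ctr_val (by omega) hana2, hsa]; omega
  have hca1 : v₂.val = n - 2 := by
    rw [hv₂, ctr_val (by omega) h12, hsa1]; omega
  have hca3 : (ctr v₁ (a + 3)).val = 0 := by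
    rw [ctr_val (by omega) h32, hsa3]
  have claimA : ctr v₁ a = v₂ - 1 := by
    apply (sub_val_negone (n := n - 1) (by omega)).2
    have hs := sub_spec (ctr v₁ a) v₂
    rw [hca, hca1] at hs
    have hb := ZMod.val_lt (ctr v₁ a - v₂)
    omega
  have claimB : ctr v₁ (a + 3) = v₂ + 1 := by
    apply (sub_val_one (n := n - 1) (by omega)).2
    have hs := sub_spec (ctr v₁ (a + 3)) v₂
    rw [hca3, hca1] at hs
    have hb := ZMod.val_lt (ctr v₁ (a + 3) - v₂)
    omega
  have havv₂ : ∀ m₁ ∈ U₁, ∀ z ∈ m₁, z ≠ v₂ := by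
    intro m₁ hm₁ z hz
    obtain ⟨m, hm, rfl⟩ := Finset.mem_image.1 hm₁
    rw [Sym2.mem_map] at hz
    obtain ⟨w, hw, rfl⟩ := hz
    intro hh
    rw [hv₂] at hh
    have := ctr_inj (by omega) (havU2 m hm w hw) h12 hh
    exact havU1 m hm w hw this
  have hno2 : ∀ m₁ ∈ U₁, m₁ ≠ s(v₂ - 1, v₂ + 1) := by
    intro m₁ hm₁ hh
    obtain ⟨m, hm, rfl⟩ := Finset.mem_image.1 hm₁
    have heq : Sym2.map (ctr v₁) m = Sym2.map (ctr v₁) s(a, a + 3) := by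
      rw [hh, Sym2.map_pair_eq, claimA, claimB]
    have hav3 : ∀ z ∈ s(a, a + 3), z ≠ v₁ := by
      intro z hz
      rw [Sym2.mem_iff] at hz
      rcases hz with rfl | rfl
      · exact hana2
      · exact h32
    exact hUe m hm (map_ctr_inj (by omega) (havU2 m hm) hav3 heq)
  have hGU₂ : Good (n - 1 - 1) (ctrS v₂ U₁) := good_ctrS (by omega) hGU₁ havv₂ hno2
  have hU₂card : (ctrS v₂ U₁).card = S.card + 1 := by
    rw [card_ctrS (by omega) havv₂, hU₁card]
  have hfin := good_card (n - 1 - 1) (by omega) _ hGU₂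
  omega

end Three


lemma isChord_map_ctr [NeZero n] {v : ZMod n} (hn : 4 ≤ n) {e : Sym2 (ZMod n)}
    (hav : ∀ z ∈ e, z ≠ v) (hc : IsChord n e) (hno : e ≠ s(v - 1, v + 1)) :
    IsChord (n - 1) (Sym2.map (ctr v) e) := by
  induction e using Sym2.ind with
  | _ x y =>
    obtain ⟨hx, hy⟩ := mem_ne_of_avoid hav x y rfl
    rw [Sym2.map_pair_eq]
    exact isChord_ctr hn hx hy hc hno

lemma ne_of_base_val [NeZero n] {a x y : ZMod n} (h : (x - a).val ≠ (y - a).val) :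
    x ≠ y := fun hh => h (by rw [hh])

/-- The statement of the three-crossing lemma, as an induction predicate. -/
def ThreeStmt (n : ℕ) : Prop :=
  ∀ (S : Finset (Sym2 (ZMod n))) (e f g : Sym2 (ZMod n)),
    Good n S → IsChord n e → IsChord n f → IsChord n g → e ∉ S → f ∉ S → g ∉ S →
    Compat n e S → Compat n f S → Compat n g S →
    Crosses n e f → Crosses n e g → Crosses n f g → S.card + 5 ≤ n

/-- the case of the three-crossing lemma where the minimal chord is `e` itself -/
lemma three_aux (n : ℕ) (hn : 3 ≤ n) [NeZero n]
    (IH : ∀ m, m < n → 3 ≤ m → ThreeStmt m)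
    (S : Finset (Sym2 (ZMod n))) (e f g : Sym2 (ZMod n))
    (hG : Good n S) (hce : IsChord n e) (hcf : IsChord n f) (hcg : IsChord n g)
    (heS : e ∉ S) (hfS : f ∉ S) (hgS : g ∉ S)
    (hCe : Compat n e S) (hCf : Compat n f S) (hCg : Compat n g S)
    (hef : Crosses n e f) (heg : Crosses n e g) (hfg : Crosses n f g)
    (a b : ZMod n) (hab : e = s(a, b))
    (hminS : ∀ m ∈ S, ∀ x y : ZMod n, m = s(x, y) → (b - a).val ≤ (y - x).val) :
    S.card + 5 ≤ n := by
  obtain ⟨hk2, hkn⟩ := (isChord_val (by omega) a b).1 (hab ▸ hce)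
  have hSav : ∀ m ∈ S, ∀ z ∈ m, ¬ Btw n a z b := by
    intro m hm z hz
    refine not_btw_of_compat (hG.1 m hm) ?_ ?_ (hminS m hm) hz
    · rw [← hab]; exact hCe m hm
    · rw [← hab]; exact fun hh => heS (hh ▸ hm)
  obtain ⟨c₁, d₁, hf1, hch1⟩ := crosses_elim hef hab
  obtain ⟨c₂, d₂, hg1, hch2⟩ := crosses_elim heg hab
  obtain ⟨u11, u12, u13⟩ := hch1
  obtain ⟨u21, u22, u23⟩ := hch2
  have hD₁n : (d₁ - a).val < n := ZMod.val_lt _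
  have hD₂n : (d₂ - a).val < n := ZMod.val_lt _
  -- c₁ ≠ c₂ from f crossing g
  have hc12 : c₁ ≠ c₂ := by
    obtain ⟨p, q, hgpq, hch3⟩ := crosses_elim hfg hf1
    obtain ⟨hd1, hd2, hd3, hd4, hd5, hd6⟩ := chain_distinct hch3
    rw [hg1, Sym2.eq_iff] at hgpq
    rcases hgpq with ⟨h1, _⟩ | ⟨h1, _⟩
    · exact h1 ▸ hd2
    · exact h1 ▸ hd3
  have hvc : (c₁ - a).val ≠ (c₂ - a).val := fun hh => hc12 (eq_of_val_sub_eq hh)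
  rcases Nat.lt_or_ge ((b - a).val) 3 with hk3 | hk3
  · -- gap 2 : impossible
    omega
  rcases Nat.lt_or_ge ((b - a).val) 4 with hk4 | hk4
  · -- gap exactly 3
    have hn5 : 5 ≤ n := by omega
    have hb3 : b = a + 3 := by
      apply eq_of_val_sub_eq (c := a)
      rw [add_sub_cancel_left, val_three'' (by omega)]
      omega
    have key : ∀ c₁' d₁' c₂' d₂' : ZMod n, (c₁' - a).val = 1 → (c₂' - a).val = 2 →
        3 < (d₁' - a).val → 3 < (d₂' - a).val →
        Crosses n s(c₁', d₁') s(c₂', d₂') →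
        Compat n s(c₁', d₁') S → Compat n s(c₂', d₂') S → S.card + 5 ≤ n := by
      intro c₁' d₁' c₂' d₂' h1 h2 h3 h4 hcr hcp1 hcp2
      have hc1e : c₁' = a + 1 := by
        apply eq_of_val_sub_eq (c := a)
        rw [add_sub_cancel_left, val_one'' (by omega)]
        omega
      have hc2e : c₂' = a + 2 := by
        apply eq_of_val_sub_eq (c := a)
        rw [add_sub_cancel_left, val_two'' (by omega)]
        omega
      rw [hc1e] at hcr hcp1
      rw [hc2e] at hcr hcp2
      refine aux3 hn5 hG h3 h4 hcr hcp1 hcp2 ?_ ?_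
      · rw [← hb3, ← hab]; exact heS
      · rw [← hb3]; exact hSav
    rcases (by omega : (c₁ - a).val = 1 ∧ (c₂ - a).val = 2 ∨
        (c₁ - a).val = 2 ∧ (c₂ - a).val = 1) with ⟨h1, h2⟩ | ⟨h1, h2⟩
    · exact key c₁ d₁ c₂ d₂ h1 h2 (by omega) (by omega)
        (by rw [← hf1, ← hg1]; exact hfg) (by rw [← hf1]; exact hCf)
        (by rw [← hg1]; exact hCg)
    · exact key c₂ d₂ c₁ d₁ h2 h1 (by omega) (by omega)
        (by rw [← hf1, ← hg1]; exact crosses_symm hfg) (by rw [← hg1]; exact hCg)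
        (by rw [← hf1]; exact hCf)
  · -- gap at least 4 : contract an unused interior vertex
    have hn6 : 6 ≤ n := by omega
    obtain ⟨j, hj1, hj3, hjc1, hjc2⟩ : ∃ j : ℕ, 1 ≤ j ∧ j ≤ 3 ∧
        j ≠ (c₁ - a).val ∧ j ≠ (c₂ - a).val := by
      rcases eq_or_ne ((c₁ - a).val) 1 with h1 | h1
      · rcases eq_or_ne ((c₂ - a).val) 2 with h2 | h2
        · exact ⟨3, by omega⟩
        · exact ⟨2, by omega⟩
      · rcases eq_or_ne ((c₂ - a).val) 1 with h2 | h2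
        · rcases eq_or_ne ((c₁ - a).val) 2 with h3 | h3
          · exact ⟨3, by omega⟩
          · exact ⟨2, by omega⟩
        · exact ⟨1, by omega⟩
    set v : ZMod n := a + (j : ℕ) with hv
    have hvval : (v - a).val = j := by
      rw [hv, add_sub_cancel_left, val_nat j (by omega)]
    have hvm : (v - 1 - a).val = j - 1 := by
      have hs := sub_spec (v - a) (1 : ZMod n)
      have he1 : (v - a) - 1 = v - 1 - a := by ring
      rw [he1, val_one'' (by omega), hvval] at hs
      have := ZMod.val_lt (v - 1 - a)
      omega
    have hvp : (v + 1 - a).val = j + 1 := by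
      have hs := sub_spec (v + 1 - a) (1 : ZMod n)
      have he1 : (v + 1 - a) - 1 = v - a := by ring
      rw [he1, val_one'' (by omega), hvval] at hs
      have := ZMod.val_lt (v + 1 - a)
      omega
    -- all pool members avoid v
    have havE : ∀ z ∈ e, z ≠ v := by
      intro z hz
      rw [hab, Sym2.mem_iff] at hz
      rcases hz with rfl | rfl
      · exact ne_of_base_val (by rw [sub_self, ZMod.val_zero, hvval]; omega)
      · exact ne_of_base_val (by rw [hvval]; omega)
    have havF : ∀ z ∈ f, z ≠ v := by
      intro z hz
      rw [hf1, Sym2.mem_iff] at hz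
      rcases hz with rfl | rfl
      · exact ne_of_base_val (by rw [hvval]; omega)
      · exact ne_of_base_val (by rw [hvval]; omega)
    have havG : ∀ z ∈ g, z ≠ v := by
      intro z hz
      rw [hg1, Sym2.mem_iff] at hz
      rcases hz with rfl | rfl
      · exact ne_of_base_val (by rw [hvval]; omega)
      · exact ne_of_base_val (by rw [hvval]; omega)
    have havS : ∀ m ∈ S, ∀ z ∈ m, z ≠ v := by
      intro m hm z hz hh
      refine hSav m hm z hz ?_
      rw [hh, Btw, hvval]
      omega
    -- no pool member equals s(v-1, v+1)
    have hnoE : e ≠ s(v - 1, v + 1) := by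
      rw [hab]
      intro hh
      rw [Sym2.eq_iff] at hh
      rcases hh with ⟨h1, h2⟩ | ⟨h1, h2⟩
      · have e1 : ((a : ZMod n) - a).val = (v - 1 - a).val := by rw [← h1]
        have e2 : (b - a).val = (v + 1 - a).val := by rw [h2]
        rw [sub_self, ZMod.val_zero, hvm] at e1
        rw [hvp] at e2
        omega
      · have e1 : ((a : ZMod n) - a).val = (v + 1 - a).val := by rw [← h1]
        rw [sub_self, ZMod.val_zero, hvp] at e1
        omega
    have hnoF : f ≠ s(v - 1, v + 1) := by
      rw [hf1]
      intro hh
      rcases Sym2.eq_iff.1 hh with ⟨_, h2⟩ | ⟨_, h2⟩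
      · have e2 : (d₁ - a).val = (v + 1 - a).val := by rw [h2]
        rw [hvp] at e2
        omega
      · have e2 : (d₁ - a).val = (v - 1 - a).val := by rw [h2]
        rw [hvm] at e2
        omega
    have hnoG : g ≠ s(v - 1, v + 1) := by
      rw [hg1]
      intro hh
      rcases Sym2.eq_iff.1 hh with ⟨_, h2⟩ | ⟨_, h2⟩
      · have e2 : (d₂ - a).val = (v + 1 - a).val := by rw [h2]
        rw [hvp] at e2
        omega
      · have e2 : (d₂ - a).val = (v - 1 - a).val := by rw [h2]
        rw [hvm] at e2
        omega
    have hnoS : ∀ m ∈ S, m ≠ s(v - 1, v + 1) := by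
      intro m hm hh
      rcases Nat.lt_or_ge j 2 with hj2 | hj2
      · -- j = 1 : v + 1 is strictly inside
        have hmem : v + 1 ∈ m := by rw [hh]; simp
        exact hSav m hm _ hmem (by rw [Btw, hvp]; omega)
      · have hmem : v - 1 ∈ m := by rw [hh]; simp
        exact hSav m hm _ hmem (by rw [Btw, hvm]; omega)
    -- contract
    haveI : NeZero (n - 1) := ⟨by omega⟩
    have hG' : Good (n - 1) (ctrS v S) := good_ctrS (by omega) hG havS hnoS
    have notmem : ∀ x : Sym2 (ZMod n), (∀ z ∈ x, z ≠ v) → x ∉ S →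
        Sym2.map (ctr v) x ∉ ctrS v S := by
      intro x hxa hxs hmem
      exact hxs ((mem_ctrS_iff (by omega) havS hxa).1 hmem)
    have := IH (n - 1) (by omega) (by omega) (ctrS v S)
      (Sym2.map (ctr v) e) (Sym2.map (ctr v) f) (Sym2.map (ctr v) g) hG'
      (isChord_map_ctr (by omega) havE hce hnoE)
      (isChord_map_ctr (by omega) havF hcf hnoF)
      (isChord_map_ctr (by omega) havG hcg hnoG)
      (notmem e havE heS) (notmem f havF hfS) (notmem g havG hgS)
      (compat_ctrS (by omega) havE havS hCe)
      (compat_ctrS (by omega) havF havS hCf)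
      (compat_ctrS (by omega) havG havS hCg)
      ((crosses_ctr (by omega) havE havF).2 hef)
      ((crosses_ctr (by omega) havE havG).2 heg)
      ((crosses_ctr (by omega) havF havG).2 hfg)
    rw [card_ctrS (by omega) havS] at this
    omega


/-- **Three crossing chords** pairwise crossing, all compatible with a noncrossing
family `S`, force `|S| ≤ n - 5`. -/
lemma three_crossing : ∀ (n : ℕ), 3 ≤ n → ThreeStmt n := by
  intro n
  induction n using Nat.strong_induction_on with
  | _ n IH =>
  intro hn S e f g hG hce hcf hcg heS hfS hgS hCe hCf hCg hef heg hfg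
  haveI : NeZero n := ⟨by omega⟩
  have IH' : ∀ m, m < n → 3 ≤ m → ThreeStmt m := fun m h1 h2 => IH m h1 h2
  set P : Finset (Sym2 (ZMod n)) := insert e (insert f (insert g S)) with hP
  have heP : e ∈ P := Finset.mem_insert_self _ _
  have hfP : f ∈ P := by rw [hP]; simp
  have hgP : g ∈ P := by rw [hP]; simp
  have hSP : ∀ m ∈ S, m ∈ P := by intro m hm; rw [hP]; simp [hm]
  obtain ⟨m₀, hm₀, hminw⟩ := P.exists_min_image wt ⟨e, heP⟩
  obtain ⟨a, b, hab, hwt⟩ := wt_orient m₀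
  have hminP : ∀ m ∈ P, ∀ x y : ZMod n, m = s(x, y) → (b - a).val ≤ (y - x).val := by
    intro m hm x y hxy
    calc (b - a).val = wt m₀ := hwt
    _ ≤ wt m := hminw m hm
    _ ≤ (y - x).val := wt_le hxy
  have hminS : ∀ m ∈ S, ∀ x y : ZMod n, m = s(x, y) → (b - a).val ≤ (y - x).val :=
    fun m hm => hminP m (hSP m hm)
  rw [hP] at hm₀
  rcases Finset.mem_insert.1 hm₀ with rfl | hm₀'
  · exact three_aux n hn IH' S m₀ f g hG hce hcf hcg heS hfS hgS hCe hCf hCg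
      hef heg hfg a b hab hminS
  rcases Finset.mem_insert.1 hm₀' with rfl | hm₀''
  · exact three_aux n hn IH' S m₀ e g hG hcf hce hcg hfS heS hgS hCf hCe hCg
      (crosses_symm hef) hfg heg a b hab hminS
  rcases Finset.mem_insert.1 hm₀'' with rfl | hm₀S
  · exact three_aux n hn IH' S m₀ e f hG hcg hce hcf hgS heS hfS hCg hCe hCf
      (crosses_symm heg) (crosses_symm hfg) hef a b hab hminS
  · -- the minimal chord belongs to S : contract as in the cardinality bound
    obtain ⟨hk2, hkn⟩ := (isChord_val (by omega) a b).1 (hab ▸ hG.1 m₀ hm₀S)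
    have hne_e : e ≠ m₀ := fun hh => heS (hh ▸ hm₀S)
    have hne_f : f ≠ m₀ := fun hh => hfS (hh ▸ hm₀S)
    have hne_g : g ≠ m₀ := fun hh => hgS (hh ▸ hm₀S)
    have hPc : ∀ m ∈ P, IsChord n m := by
      intro m hm
      rw [hP] at hm
      rcases Finset.mem_insert.1 hm with rfl | hm
      · exact hce
      rcases Finset.mem_insert.1 hm with rfl | hm
      · exact hcf
      rcases Finset.mem_insert.1 hm with rfl | hm
      · exact hcg
      · exact hG.1 m hm
    have hPnc : ∀ m ∈ P, m ≠ m₀ → ¬ Crosses n m₀ m := by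
      intro m hm hne
      rw [hP] at hm
      rcases Finset.mem_insert.1 hm with rfl | hm
      · exact fun hc => hCe m₀ hm₀S (crosses_symm hc)
      rcases Finset.mem_insert.1 hm with rfl | hm
      · exact fun hc => hCf m₀ hm₀S (crosses_symm hc)
      rcases Finset.mem_insert.1 hm with rfl | hm
      · exact fun hc => hCg m₀ hm₀S (crosses_symm hc)
      · exact hG.2 m₀ hm₀S m hm (Ne.symm hne)
    have hPav : ∀ m ∈ P, m ≠ m₀ → ∀ z ∈ m, ¬ Btw n a z b := by
      intro m hm hne z hz
      refine not_btw_of_compat (hPc m hm) ?_ ?_ (hminP m hm) hz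
      · rw [← hab]; exact hPnc m hm hne
      · rw [← hab]; exact hne
    have hva : a ≠ a + 1 := ne_v_left (b := b) (by omega)
    have hvb : b ≠ a + 1 := ne_v_right (by omega)
    have hbtwv : Btw n a (a + 1) b := btw_add_one hk2
    set v : ZMod n := a + 1 with hv
    have havE : ∀ z ∈ e, z ≠ v := fun z hz hh => hPav e heP hne_e z hz (hh ▸ hbtwv)
    have havF : ∀ z ∈ f, z ≠ v := fun z hz hh => hPav f hfP hne_f z hz (hh ▸ hbtwv)
    have havG : ∀ z ∈ g, z ≠ v := fun z hz hh => hPav g hgP hne_g z hz (hh ▸ hbtwv)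
    haveI : NeZero (n - 1) := ⟨by omega⟩
    rcases Nat.lt_or_ge ((b - a).val) 3 with hk3 | hk3
    · -- gap 2 : m₀ = s(v-1, v+1), erase it and contract
      have hb2 : b = v + 1 := by
        have hvt : (b - a).val = ((a + 2 : ZMod n) - a).val := by
          rw [add_sub_cancel_left, val_two'' (by omega)]; omega
        have h2 := eq_of_val_sub_eq hvt
        rw [h2, hv]; ring
      have hvm1 : v - 1 = a := by rw [hv]; ring
      have hee : m₀ = s(v - 1, v + 1) := by rw [hab, hvm1, hb2]
      set S₀ := S.erase m₀ with hS₀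
      have hS₀P : ∀ m ∈ S₀, m ∈ P ∧ m ≠ m₀ := by
        intro m hm
        obtain ⟨h1, h2⟩ := Finset.mem_erase.1 hm
        exact ⟨hSP m h2, h1⟩
      have havS₀ : ∀ m ∈ S₀, ∀ z ∈ m, z ≠ v := by
        intro m hm z hz hh
        obtain ⟨h1, h2⟩ := hS₀P m hm
        exact hPav m h1 h2 z hz (hh ▸ hbtwv)
      have hnoS₀ : ∀ m ∈ S₀, m ≠ s(v - 1, v + 1) := by
        intro m hm
        rw [← hee]
        exact (Finset.mem_erase.1 hm).1
      have hG₀ : Good n S₀ := good_subset hG (Finset.erase_subset _ _)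
      have hG' : Good (n - 1) (ctrS v S₀) := good_ctrS (by omega) hG₀ havS₀ hnoS₀
      have notmem : ∀ x : Sym2 (ZMod n), (∀ z ∈ x, z ≠ v) → x ∉ S →
          Sym2.map (ctr v) x ∉ ctrS v S₀ := by
        intro x hxa hxs hmem
        have := (mem_ctrS_iff (by omega) havS₀ hxa).1 hmem
        exact hxs (Finset.mem_of_mem_erase this)
      have hCe₀ : Compat n e S₀ := fun m hm => hCe m (Finset.mem_of_mem_erase hm)
      have hCf₀ : Compat n f S₀ := fun m hm => hCf m (Finset.mem_of_mem_erase hm)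
      have hCg₀ : Compat n g S₀ := fun m hm => hCg m (Finset.mem_of_mem_erase hm)
      have hnoE : e ≠ s(v - 1, v + 1) := by rw [← hee]; exact hne_e
      have hnoF : f ≠ s(v - 1, v + 1) := by rw [← hee]; exact hne_f
      have hnoG : g ≠ s(v - 1, v + 1) := by rw [← hee]; exact hne_g
      have hfin := IH' (n - 1) (by omega) (by omega) (ctrS v S₀)
        (Sym2.map (ctr v) e) (Sym2.map (ctr v) f) (Sym2.map (ctr v) g) hG'
        (isChord_map_ctr (by omega) havE hce hnoE)
        (isChord_map_ctr (by omega) havF hcf hnoF)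
        (isChord_map_ctr (by omega) havG hcg hnoG)
        (notmem e havE heS) (notmem f havF hfS) (notmem g havG hgS)
        (compat_ctrS (by omega) havE havS₀ hCe₀)
        (compat_ctrS (by omega) havF havS₀ hCf₀)
        (compat_ctrS (by omega) havG havS₀ hCg₀)
        ((crosses_ctr (by omega) havE havF).2 hef)
        ((crosses_ctr (by omega) havE havG).2 heg)
        ((crosses_ctr (by omega) havF havG).2 hfg)
      rw [card_ctrS (by omega) havS₀, hS₀, Finset.card_erase_of_mem hm₀S] at hfin
      have hpos : 1 ≤ S.card := Finset.card_pos.2 ⟨m₀, hm₀S⟩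
      omega
    · -- gap ≥ 3 : v = a+1 is an unused interior vertex, contract everything
      have hbtw2 : Btw n a (a + 2) b := btw_add_two hk3
      have havS : ∀ m ∈ S, ∀ z ∈ m, z ≠ v := by
        intro m hm z hz
        rcases eq_or_ne m m₀ with rfl | hne
        · rw [hab] at hz
          rcases Sym2.mem_iff.1 hz with rfl | rfl
          · exact hva
          · exact hvb
        · exact fun hh => hPav m (hSP m hm) hne z hz (hh ▸ hbtwv)
      have hveq : s(v - 1, v + 1) = s(a, a + 2) := by
        have h1 : v - 1 = a := by rw [hv]; ring
        have h2 : v + 1 = a + 2 := by rw [hv]; ring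
        rw [h1, h2]
      have hnoP : ∀ m ∈ P, m ≠ s(v - 1, v + 1) := by
        intro m hm hh
        rw [hveq] at hh
        rcases eq_or_ne m m₀ with rfl | hne
        · rw [hab, Sym2.eq_iff] at hh
          rcases hh with ⟨_, h2⟩ | ⟨h2, _⟩
          · rw [h2, add_sub_cancel_left, val_two'' (by omega)] at hk3
            omega
          · have e1 : ((a : ZMod n) - a).val = ((a + 2 : ZMod n) - a).val := by
              rw [← h2]
            rw [sub_self, ZMod.val_zero, add_sub_cancel_left, val_two'' (by omega)] at e1
            omega
        · have hz : (a + 2 : ZMod n) ∈ m := by rw [hh]; simp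
          exact hPav m hm hne _ hz hbtw2
      have hnoS : ∀ m ∈ S, m ≠ s(v - 1, v + 1) := fun m hm => hnoP m (hSP m hm)
      have hG' : Good (n - 1) (ctrS v S) := good_ctrS (by omega) hG havS hnoS
      have notmem : ∀ x : Sym2 (ZMod n), (∀ z ∈ x, z ≠ v) → x ∉ S →
          Sym2.map (ctr v) x ∉ ctrS v S := by
        intro x hxa hxs hmem
        exact hxs ((mem_ctrS_iff (by omega) havS hxa).1 hmem)
      have hfin := IH' (n - 1) (by omega) (by omega) (ctrS v S)
        (Sym2.map (ctr v) e) (Sym2.map (ctr v) f) (Sym2.map (ctr v) g) hG'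
        (isChord_map_ctr (by omega) havE hce (hnoP e heP))
        (isChord_map_ctr (by omega) havF hcf (hnoP f hfP))
        (isChord_map_ctr (by omega) havG hcg (hnoP g hgP))
        (notmem e havE heS) (notmem f havF hfS) (notmem g havG hgS)
        (compat_ctrS (by omega) havE havS hCe)
        (compat_ctrS (by omega) havF havS hCf)
        (compat_ctrS (by omega) havG havS hCg)
        ((crosses_ctr (by omega) havE havF).2 hef)
        ((crosses_ctr (by omega) havE havG).2 heg)
        ((crosses_ctr (by omega) havF havG).2 hfg)
      rw [card_ctrS (by omega) havS] at hfin
      omega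


/-- Auxiliary: adjoining a compatible chord to a noncrossing family stays noncrossing. -/
lemma good_insert [NeZero n] {S : Finset (Sym2 (ZMod n))} {h : Sym2 (ZMod n)}
    (hG : Good n S) (hc : IsChord n h) (hcmp : Compat n h S) : Good n (insert h S) := by
  constructor
  · intro m hm
    rcases Finset.mem_insert.1 hm with rfl | hm
    · exact hc
    · exact hG.1 m hm
  · intro m hm m' hm' hne
    rcases Finset.mem_insert.1 hm with h1 | h1
    · rcases Finset.mem_insert.1 hm' with h2 | h2
      · exact absurd (h1.trans h2.symm) hne
      · subst h1; exact hcmp m' h2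
    · rcases Finset.mem_insert.1 hm' with h2 | h2
      · subst h2; exact fun hcr => hcmp m h1 (crosses_symm hcr)
      · exact hG.2 m h1 m' h2 hne

/-- Every chord of a triangulation of a convex polygon can be
flipped, and the flip is unique: if `n ≥ 4`, `T` is a triangulation and
`e ∈ T`, then there is exactly one chord `f ≠ e` such that
`(T \ {e}) ∪ {f}` is again a triangulation. -/
theorem flip_exists_unique (n : ℕ) (hn : 4 ≤ n)
    (T : Finset (Sym2 (ZMod n))) (hT : IsTriangulation n T)
    (e : Sym2 (ZMod n)) (he : e ∈ T) :
    ∃! f : Sym2 (ZMod n), f ≠ e ∧ IsTriangulation n (insert f (T.erase e)) := by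
  haveI : NeZero n := ⟨by omega⟩
  obtain ⟨hTcard, hTc, hTnc⟩ := hT
  set S := T.erase e with hS
  have hGS : Good n S := good_subset ⟨hTc, hTnc⟩ (Finset.erase_subset _ _)
  have hScard : S.card = n - 4 := by
    rw [hS, Finset.card_erase_of_mem he, hTcard]; omega
  have heS : e ∉ S := Finset.notMem_erase _ _
  have hCe : Compat n e S := by
    intro m hm
    exact hTnc e he m (Finset.mem_of_mem_erase hm) (Ne.symm (Finset.mem_erase.1 hm).1)
  have hce : IsChord n e := hTc e he
  -- properties forced on any flip candidate
  have cand : ∀ f₁ : Sym2 (ZMod n), f₁ ≠ e → IsTriangulation n (insert f₁ S) →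
      f₁ ∉ S ∧ IsChord n f₁ ∧ Compat n f₁ S := by
    intro f₁ hne htri
    have hf₁S : f₁ ∉ S := by
      intro hmem
      have hins : insert f₁ S = S := Finset.insert_eq_self.2 hmem
      rw [hins] at htri
      have hcc := htri.1
      omega
    refine ⟨hf₁S, htri.2.1 f₁ (Finset.mem_insert_self _ _), ?_⟩
    intro m hm
    exact htri.2.2 f₁ (Finset.mem_insert_self _ _) m
      (Finset.mem_insert_of_mem hm) (fun hh => hf₁S (hh ▸ hm))
  -- any two distinct flip candidates (or e) must cross
  have cross_of : ∀ p q : Sym2 (ZMod n), IsChord n p → IsChord n q → p ∉ S → q ∉ S →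
      Compat n p S → Compat n q S → p ≠ q → Crosses n p q := by
    intro p q hp hq hpS hqS hCp hCq hpq
    by_contra hnc
    have hW : Good n (insert p (insert q S)) := by
      apply good_insert (good_insert hGS hq hCq) hp
      intro m hm
      rcases Finset.mem_insert.1 hm with rfl | hm
      · exact hnc
      · exact hCp m hm
    have hcard : (insert p (insert q S)).card = n - 2 := by
      rw [Finset.card_insert_of_notMem, Finset.card_insert_of_notMem hqS, hScard]
      · omega
      · intro hmem
        rcases Finset.mem_insert.1 hmem with rfl | hmem
        · exact hpq rfl
        · exact hpS hmem
    have := good_card n (by omega) _ hW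
    omega
  -- existence from the extension lemma
  obtain ⟨f, g, hfg, hcf, hcg, hfS, hgS, hCf, hCg⟩ :=
    exists_two_ext n hn S hGS (by omega)
  have mk_tri : ∀ h : Sym2 (ZMod n), IsChord n h → h ∉ S → Compat n h S →
      IsTriangulation n (insert h S) := by
    intro h hc hhS hcmp
    have hG' := good_insert hGS hc hcmp
    exact ⟨by rw [Finset.card_insert_of_notMem hhS, hScard]; omega, hG'.1, hG'.2⟩
  have hwit : ∃ w : Sym2 (ZMod n), w ≠ e ∧ IsTriangulation n (insert w S) := by
    rcases eq_or_ne f e with hfe | hfe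
    · exact ⟨g, fun hh => hfg (hfe.trans hh.symm), mk_tri g hcg hgS hCg⟩
    · exact ⟨f, hfe, mk_tri f hcf hfS hCf⟩
  obtain ⟨w, hwe, hwtri⟩ := hwit
  refine ⟨w, ⟨hwe, hwtri⟩, ?_⟩
  intro y ⟨hye, hytri⟩
  by_contra hyw
  obtain ⟨hyS, hyc, hyC⟩ := cand y hye hytri
  obtain ⟨hwS, hwc, hwC⟩ := cand w hwe hwtri
  have h1 : Crosses n e y := cross_of e y hce hyc heS hyS hCe hyC (Ne.symm hye)
  have h2 : Crosses n e w := cross_of e w hce hwc heS hwS hCe hwC (Ne.symm hwe)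
  have h3 : Crosses n y w := cross_of y w hyc hwc hyS hwS hyC hwC hyw
  have := three_crossing n (by omega) S e y w hGS hce hyc hwc heS hyS hwS
    hCe hyC hwC h1 h2 h3
  omega


end FlipCut
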